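/- arXiv:1211.3226 — 5 statements merged into one kernel-verified Lean document; each statement's English description precedes it below -/
import Mathlib

section
/- Let T be a tree (a connected simple graph with no cycles) on vertex set V with graph distance d, and fix a base vertex w ∈ V. For x, y ∈ V let (x·y)_w = (d(x,w) + d(y,w) − d(x,y))/2 ∈ ℝ, and define d'(x,y) = e^{−(x·y)_w} for x ≠ y and d'(x,x) = 0. Then d' is an ultrametric on V: d'(x,y) ≥ 0 with equality iff x = y, d'(x,y) = d'(y,x), and d'(x,y) ≤ max(d'(x,z), d'(y,z)) for all x, y, z ∈ V. -/
open SimpleGraph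

section TreeUltrametric

variable {V : Type*} [DecidableEq V] {T : SimpleGraph V}

private lemma concat_path' {w u m : V} {P : T.Walk w u}
    (hP : P.IsPath) (h : T.Adj u m) (hm : m ∉ P.support) : (P.concat h).IsPath := by
  rw [← Walk.isPath_reverse_iff, Walk.reverse_concat]
  exact (Walk.cons_isPath_iff _ _).2 ⟨hP.reverse, by simpa using hm⟩

private lemma exists_geodesic' (hc : T.Connected) (u v : V) :
    ∃ P : T.Walk u v, P.IsPath ∧ P.length = T.dist u v := by
  obtain ⟨p, hp⟩ := hc.exists_walk_length_eq_dist u v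
  exact ⟨p, p.isPath_of_length_eq_dist hp, hp⟩

private lemma dist_lt_of_mem' {w u v : V} {P : T.Walk w u}
    (hP : P.length = T.dist w u) (hv : v ∈ P.support) (hne : v ≠ u) :
    T.dist w v < T.dist w u := by
  have h1 := congrArg Walk.length (P.take_spec hv)
  rw [Walk.length_append] at h1
  have h2 : T.dist w v ≤ (P.takeUntil v hv).length := SimpleGraph.dist_le _
  have h3 : (P.dropUntil v hv).length ≠ 0 := fun h0 => hne (Walk.eq_of_length_eq_zero h0)
  omega

private lemma adj_dist_ne' (hT : T.IsTree) {u v : V} (h : T.Adj u v) (w : V) :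
    T.dist w u ≠ T.dist w v := by
  intro heq
  have hc := hT.isConnected
  obtain ⟨P, hPp, hPl⟩ := exists_geodesic' hc w u
  obtain ⟨Q, hQp, hQl⟩ := exists_geodesic' hc w v
  by_cases hv : v ∈ P.support
  · by_cases hvu : v = u
    · exact h.ne' hvu
    · have := dist_lt_of_mem' hPl hv hvu; omega
  · by_cases hu : u ∈ Q.support
    · by_cases huv : u = v
      · exact h.ne huv
      · have := dist_lt_of_mem' hQl hu huv; omega
    · have hP' := concat_path' hPp h hv
      have heqw := (hT.existsUnique_path w v).unique hP' hQp
      have hlen := congrArg Walk.length heqw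
      rw [Walk.length_concat] at hlen
      omega

private lemma no_local_max' (hT : T.IsTree) {u v m w : V}
    (h1 : T.Adj u m) (h2 : T.Adj v m)
    (d1 : T.dist w u + 1 = T.dist w m) (d2 : T.dist w v + 1 = T.dist w m) : u = v := by
  have hc := hT.isConnected
  obtain ⟨P, hPp, hPl⟩ := exists_geodesic' hc w u
  obtain ⟨Q, hQp, hQl⟩ := exists_geodesic' hc w v
  have hmP : m ∉ P.support := by
    intro hm
    by_cases hmu : m = u
    · rw [hmu] at d1; omega
    · have := dist_lt_of_mem' hPl hm hmu; omega
  have hmQ : m ∉ Q.support := by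
    intro hm
    by_cases hmv : m = v
    · rw [hmv] at d2; omega
    · have := dist_lt_of_mem' hQl hm hmv; omega
  have hP' := concat_path' hPp h1 hmP
  have hQ' := concat_path' hQp h2 hmQ
  have heqw := (hT.existsUnique_path w m).unique hP' hQ'
  have hu : (P.concat h1).getVert P.length = u := by
    rw [Walk.concat_eq_append, Walk.getVert_append]
    simp
  have hv : (Q.concat h2).getVert Q.length = v := by
    rw [Walk.concat_eq_append, Walk.getVert_append]
    simp
  have hlen : P.length = Q.length := by omega
  calc u = (P.concat h1).getVert P.length := hu.symm
    _ = (Q.concat h2).getVert Q.length := by rw [heqw, hlen]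
    _ = v := hv

private lemma adj_dist_cases' (hT : T.IsTree) {a b : V} (h : T.Adj a b) (w : V) :
    T.dist w b = T.dist w a + 1 ∨ T.dist w a = T.dist w b + 1 := by
  have hab : T.dist a b = 1 := SimpleGraph.dist_eq_one_iff_adj.mpr h
  have hba : T.dist b a = 1 := SimpleGraph.dist_eq_one_iff_adj.mpr h.symm
  have t1 : T.dist w b ≤ T.dist w a + T.dist a b := hT.isConnected.dist_triangle
  have t2 : T.dist w a ≤ T.dist w b + T.dist b a := hT.isConnected.dist_triangle
  have hne := adj_dist_ne' hT h w
  omega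

private lemma dist_getVert_le' (hc : T.Connected) {x y : V} (W : T.Walk x y) (k : ℕ) :
    T.dist x (W.getVert k) ≤ k := by
  induction k with
  | zero => simp [Walk.getVert_zero]
  | succ k ih =>
    by_cases hk : k < W.length
    · have hadj := W.adj_getVert_succ hk
      have h1 : T.dist (W.getVert k) (W.getVert (k+1)) = 1 :=
        SimpleGraph.dist_eq_one_iff_adj.mpr hadj
      have h2 : T.dist x (W.getVert (k+1)) ≤
          T.dist x (W.getVert k) + T.dist (W.getVert k) (W.getVert (k+1)) :=
        hc.dist_triangle
      omega
    · have e1 : W.getVert (k+1) = y := W.getVert_of_length_le (by omega)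
      have e2 : W.getVert k = y := W.getVert_of_length_le (by omega)
      rw [e1, ← e2]
      omega

private lemma dist_getVert' (hc : T.Connected) {x y : V} {W : T.Walk x y}
    (hW : W.length = T.dist x y) (k : ℕ) (hk : k ≤ W.length) :
    T.dist x (W.getVert k) = k ∧ T.dist (W.getVert k) y = W.length - k := by
  have h1 : T.dist x (W.getVert k) ≤ k := dist_getVert_le' hc W k
  have h2 : T.dist y (W.getVert k) ≤ W.length - k := by
    have := dist_getVert_le' hc W.reverse (W.length - k)
    rwa [Walk.getVert_reverse, show W.length - (W.length - k) = k by omega] at this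
  have h3 : T.dist x y ≤ T.dist x (W.getVert k) + T.dist (W.getVert k) y := hc.dist_triangle
  have h4 : T.dist (W.getVert k) y = T.dist y (W.getVert k) := SimpleGraph.dist_comm
  omega

private lemma valley' (hT : T.IsTree) (w : V) {x y : V} (W : T.Walk x y)
    (hW : W.length = T.dist x y) :
    ∃ j ≤ W.length,
      (∀ k ≤ j, T.dist w (W.getVert k) + k = T.dist w x) ∧
      (∀ k, j ≤ k → k ≤ W.length → T.dist w (W.getVert k) + (W.length - k) = T.dist w y) := by
  have hc := hT.isConnected
  set n := W.length with hn
  set s : ℕ → ℕ := fun k => T.dist w (W.getVert k) with hs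
  have dich : ∀ k < n, s (k+1) = s k + 1 ∨ s k = s (k+1) + 1 := fun k hk =>
    adj_dist_cases' hT (W.adj_getVert_succ hk) w
  have nlm : ∀ k, k + 2 ≤ n → s (k+1) = s k + 1 → s (k+2) = s (k+1) + 1 := by
    intro k hk hup
    rcases dich (k+1) (by omega) with h | h
    · exact h
    · exfalso
      have hd1 : T.dist w (W.getVert k) + 1 = T.dist w (W.getVert (k+1)) := by
        have := hup
        simp only [hs] at this
        omega
      have hd2 : T.dist w (W.getVert (k+1+1)) + 1 = T.dist w (W.getVert (k+1)) := by
        have := h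
        simp only [hs] at this
        omega
      have he : W.getVert k = W.getVert (k+1+1) :=
        no_local_max' hT (W.adj_getVert_succ (by omega))
          ((W.adj_getVert_succ (i := k+1) (by omega)).symm) hd1 hd2
      have e1 : T.dist x (W.getVert k) = k := (dist_getVert' hc hW k (by omega)).1
      have e2 : T.dist x (W.getVert (k+1+1)) = k+1+1 :=
        (dist_getVert' hc hW (k+1+1) (by omega)).1
      rw [he] at e1
      omega
  have mono : ∀ l, l + 1 ≤ n → ∀ k ≤ l, s (k+1) = s k + 1 → s (l+1) = s l + 1 := by
    intro l
    induction l with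
    | zero =>
      intro _ k hk hup
      have : k = 0 := by omega
      rwa [this] at hup
    | succ l ih =>
      intro hnl k hk hup
      rcases Nat.lt_or_ge k (l+1) with h | h
      · exact nlm l hnl (ih (by omega) k (by omega) hup)
      · have : k = l + 1 := by omega
        rwa [this] at hup
  have main : ∀ j, j ≤ n → (∀ k < j, s k = s (k+1) + 1) →
      (∀ k, j ≤ k → k + 1 ≤ n → s (k+1) = s k + 1) →
      ∃ j ≤ W.length,
        (∀ k ≤ j, T.dist w (W.getVert k) + k = T.dist w x) ∧
        (∀ k, j ≤ k → k ≤ W.length → T.dist w (W.getVert k) + (W.length - k) = T.dist w y) := by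
    intro j hjn hdec hinc
    have c1 : ∀ k ≤ j, s k + k = s 0 := by
      intro k
      induction k with
      | zero => intro _; rfl
      | succ k ih =>
        intro hk
        have hd := hdec k (by omega)
        have := ih (by omega)
        omega
    have claim : ∀ k, j ≤ k → k ≤ n → s k = s j + (k - j) := by
      intro k
      induction k with
      | zero =>
        intro h1 _
        have : j = 0 := by omega
        rw [this]
        omega
      | succ k ih =>
        intro h1 h2
        by_cases hjk : j ≤ k
        · have ha := ih hjk (by omega)
          have hb := hinc k hjk h2
          omega
        · have : j = k + 1 := by omega
          rw [this]
          omega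
    have c2 : ∀ k, j ≤ k → k ≤ n → s k + (n - k) = s n := by
      intro k h1 h2
      have a := claim k h1 h2
      have b := claim n (le_trans h1 h2) le_rfl
      omega
    refine ⟨j, hjn, ?_, ?_⟩
    · intro k hk
      have := c1 k hk
      rw [hs] at this
      simpa [Walk.getVert_zero] using this
    · intro k h1 h2
      have := c2 k h1 h2
      rw [hs, hn] at this
      simpa [Walk.getVert_length] using this
  by_cases hex : ∃ k, k < n ∧ s (k+1) = s k + 1
  · have hj := Nat.find_spec hex
    refine main (Nat.find hex) (by omega) ?_ ?_
    · intro k hk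
      have hkn : k < n := by omega
      rcases dich k hkn with h | h
      · exact absurd ⟨hkn, h⟩ (Nat.find_min hex hk)
      · exact h
    · intro k hk hkn
      exact mono k hkn (Nat.find hex) hk hj.2
  · push_neg at hex
    refine main n le_rfl ?_ ?_
    · intro k hk
      exact (dich k hk).resolve_left (hex k hk)
    · intro k hk hkn
      omega

private lemma key' (hT : T.IsTree) (x y z w : V) :
    T.dist x y + T.dist z w ≤ T.dist x z + T.dist y w ∨
    T.dist x y + T.dist z w ≤ T.dist x w + T.dist y z := by
  have hc := hT.isConnected
  obtain ⟨W, hW⟩ := hc.exists_walk_length_eq_dist x y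
  obtain ⟨jw, hjwn, hw1, hw2⟩ := valley' hT w W hW
  obtain ⟨jz, hjzn, hz1, hz2⟩ := valley' hT z W hW
  set m := W.getVert jw with hm
  have tri : T.dist z w ≤ T.dist z m + T.dist m w := hc.dist_triangle
  have hmw : T.dist m w = T.dist w m := SimpleGraph.dist_comm
  have hwx : T.dist w m + jw = T.dist w x := hw1 jw le_rfl
  have hwy : T.dist w m + (W.length - jw) = T.dist w y := hw2 jw le_rfl hjwn
  rcases le_total jw jz with h | h
  · left
    have hzx : T.dist z m + jw = T.dist z x := hz1 jw h
    rw [SimpleGraph.dist_comm (u := x) (v := z), SimpleGraph.dist_comm (u := y) (v := w), ← hW]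
    omega
  · right
    have hzy : T.dist z m + (W.length - jw) = T.dist z y := hz2 jw h hjwn
    rw [SimpleGraph.dist_comm (u := x) (v := w), SimpleGraph.dist_comm (u := y) (v := z), ← hW]
    omega

end TreeUltrametric

/-- On a tree with base vertex `w`, the function
`d'(x,y) = exp(-(x·y)_w)` for `x ≠ y` and `d'(x,x) = 0`, where
`(x·y)_w = (d(x,w) + d(y,w) - d(x,y))/2` is the Gromov product, is an ultrametric. -/
theorem stmt_5 {V : Type*} [DecidableEq V] (T : SimpleGraph V) (hT : T.IsTree)
    (w : V) (d' : V → V → ℝ)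
    (hd' : ∀ x y : V, d' x y = if x = y then 0
      else Real.exp (-(((T.dist x w : ℝ) + (T.dist y w : ℝ) - (T.dist x y : ℝ)) / 2))) :
    (∀ x y : V, 0 ≤ d' x y) ∧
    (∀ x y : V, d' x y = 0 ↔ x = y) ∧
    (∀ x y : V, d' x y = d' y x) ∧
    (∀ x y z : V, d' x y ≤ max (d' x z) (d' y z)) := by
  have h0 : ∀ x y : V, 0 ≤ d' x y := by
    intro x y
    rw [hd']
    split_ifs
    · exact le_refl 0
    · exact (Real.exp_pos _).le
  have hsymm : ∀ x y : V, d' x y = d' y x := by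
    intro x y
    rw [hd' x y, hd' y x]
    by_cases h : x = y
    · simp [h]
    · rw [if_neg h, if_neg (Ne.symm h), SimpleGraph.dist_comm (u := y) (v := x)]
      ring_nf
  refine ⟨h0, ?_, hsymm, ?_⟩
  · intro x y
    rw [hd']
    split_ifs with h
    · simp [h]
    · exact ⟨fun h0' => absurd h0' (Real.exp_pos _).ne', fun hxy => absurd hxy h⟩
  · intro x y z
    by_cases hxy : x = y
    · subst hxy
      rw [hd']
      simp only [if_pos rfl]
      exact le_max_of_le_left (h0 x z)
    by_cases hxz : x = z
    · subst hxz
      rw [hsymm x y]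
      exact le_max_of_le_right le_rfl
    by_cases hyz : y = z
    · subst hyz
      exact le_max_of_le_left le_rfl
    rw [hd' x y, hd' x z, hd' y z, if_neg hxy, if_neg hxz, if_neg hyz]
    rcases key' hT x y z w with h | h
    · have hR : (T.dist x y : ℝ) + T.dist z w ≤ T.dist x z + T.dist y w := by exact_mod_cast h
      have hzw : (T.dist z w : ℝ) = T.dist w z := by rw [SimpleGraph.dist_comm]
      have hyw : (T.dist y w : ℝ) = T.dist w y := by rw [SimpleGraph.dist_comm]
      refine le_max_of_le_left (Real.exp_le_exp.mpr ?_)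
      rw [hzw] at hR
      have hzw2 : (T.dist z w : ℝ) = T.dist w z := hzw
      linarith [hR]
    · have hR : (T.dist x y : ℝ) + T.dist z w ≤ T.dist x w + T.dist y z := by exact_mod_cast h
      refine le_max_of_le_right (Real.exp_le_exp.mpr ?_)
      have hzw : (T.dist z w : ℝ) = T.dist w z := by rw [SimpleGraph.dist_comm]
      rw [hzw] at hR
      linarith [hR]
end

section
/- Let G be a countable group, μ a non-degenerate probability measure on G, and ℏ : G → ℝ a seminorm (ℏ(g) ≥ 0, ℏ(1) = 0, ℏ(gh) ≤ ℏ(g) + ℏ(h), ℏ(g) = ℏ(g⁻¹)) that is unbounded on G (for every d there exists g ∈ G with ℏ(g) > d). Then for almost every increment sequence (X_i) with respect to the product measure μ^{⊗ℕ} on G^ℕ, the path τ_n = X₁⋯X_n satisfies lim sup_{n→∞} ℏ(τ_n) = ∞; in particular almost every path contains a subsequence (τ_{n_j}) with ℏ(τ_{n_j}) → ∞. -/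
/-!
Fix `D` and pick `g` with `nrm g > 2D`; by non-degeneracy `g = w₀ ⋯ w_{ℓ-1}` with every `wⱼ`
charged by `μ`. The events "the increments on the block `[kℓ, kℓ + ℓ)` spell `w`" are
independent cylinders of the same positive probability, so by the second Borel–Cantelli lemma
almost surely infinitely many of them occur. Each occurrence gives `τ_{kℓ+ℓ} = τ_{kℓ} g`, and then
`nrm g ≤ nrm τ_{kℓ} + nrm τ_{kℓ+ℓ}` forces one of the two to exceed `D`.
-/

open Function MeasureTheory Filter ProbabilityTheory
open scoped ENNReal

section Cylinders

variable {ι G : Type*} [MeasurableSpace G] [MeasurableSingletonClass G]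

lemma measurableSet_setOf_forall_mem_eq (s : Finset ι) (c : ι → G) :
    MeasurableSet {X : ι → G | ∀ i ∈ s, X i = c i} := by
  simp only [Set.ofPred_forall]
  exact .biInter s.countable_toSet fun i _ ↦ measurable_pi_apply i (.singleton _)

lemma iIndepSet_setOf_forall_mem_eq {κ : Type*} {μ : G → ℝ≥0∞} {P : Measure (ι → G)}
    (hP : ∀ (s : Finset ι) (c : ι → G), P {X | ∀ i ∈ s, X i = c i} = ∏ i ∈ s, μ (c i))
    {s : κ → Finset ι} (hs : Pairwise (Disjoint on s)) (c : ι → G) :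
    iIndepSet (fun k ↦ {X : ι → G | ∀ i ∈ s k, X i = c i}) P := by
  classical
  rw [iIndepSet_iff_meas_biInter fun k ↦ measurableSet_setOf_forall_mem_eq (s k) c]
  intro K
  have hinter : ⋂ k ∈ K, {X : ι → G | ∀ i ∈ s k, X i = c i} =
      {X | ∀ i ∈ K.biUnion s, X i = c i} := by
    ext X
    simp only [Set.mem_iInter, Set.mem_ofPred_eq, Finset.mem_biUnion]
    grind
  rw [hinter, hP, Finset.prod_biUnion (hs.set_pairwise _)]
  simp only [hP]

lemma ae_frequently_forall_mem_eq {μ : G → ℝ≥0∞} {P : Measure (ι → G)} [IsProbabilityMeasure P]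
    (hP : ∀ (s : Finset ι) (c : ι → G), P {X | ∀ i ∈ s, X i = c i} = ∏ i ∈ s, μ (c i))
    {s : ℕ → Finset ι} (hs : Pairwise (Disjoint on s)) (c : ι → G)
    (hsum : ∑' k, ∏ i ∈ s k, μ (c i) = ∞) :
    ∀ᵐ X ∂P, ∃ᶠ k in atTop, ∀ i ∈ s k, X i = c i := by
  have hm := fun k ↦ measurableSet_setOf_forall_mem_eq (s k) c
  have hlimsup := measure_limsup_eq_one hm (iIndepSet_setOf_forall_mem_eq hP hs c)
    (by simpa only [hP] using hsum)
  have hset : {X | ∃ᶠ k in atTop, ∀ i ∈ s k, X i = c i} =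
      limsup (fun k ↦ {X : ι → G | ∀ i ∈ s k, X i = c i}) atTop := by
    ext X
    rw [mem_limsup_iff_frequently_mem]
    rfl
  have hmeas : NullMeasurableSet {X | ∃ᶠ k in atTop, ∀ i ∈ s k, X i = c i} P :=
    hset ▸ (MeasurableSet.measurableSet_limsup hm).nullMeasurableSet
  rw [ae_iff_measure_eq hmeas, hset, hlimsup, measure_univ]

lemma pairwise_disjoint_Ico_mul (ℓ : ℕ) :
    Pairwise (Disjoint on fun k ↦ Finset.Ico (k * ℓ) (k * ℓ + ℓ)) := by
  intro a b hab
  rw [Function.onFun, Finset.disjoint_left]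
  intro i hia hib
  simp only [Finset.mem_Ico] at hia hib
  exact hab ((Nat.div_eq_of_lt_le hia.1 (by rw [Nat.succ_mul]; exact hia.2)).symm.trans
    (Nat.div_eq_of_lt_le hib.1 (by rw [Nat.succ_mul]; exact hib.2)))

lemma ae_frequently_forall_fin_eq {μ : G → ℝ≥0∞} {P : Measure (ℕ → G)} [IsProbabilityMeasure P]
    (hP : ∀ (s : Finset ℕ) (c : ℕ → G), P {X | ∀ i ∈ s, X i = c i} = ∏ i ∈ s, μ (c i))
    {ℓ : ℕ} (hℓ : 0 < ℓ) (w : Fin ℓ → G) (hw : ∀ j, 0 < μ (w j)) :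
    ∀ᵐ X ∂P, ∃ᶠ k in atTop, ∀ j : Fin ℓ, X (k * ℓ + j) = w j := by
  set c : ℕ → G := fun i ↦ w ⟨i % ℓ, Nat.mod_lt i hℓ⟩
  have hc : ∀ k (j : ℕ) (hj : j < ℓ), c (k * ℓ + j) = w ⟨j, hj⟩ := by
    intro k j hj
    simp only [c, Nat.mul_add_mod_of_lt hj]
  have hblock : ∀ k, ∏ i ∈ Finset.Ico (k * ℓ) (k * ℓ + ℓ), μ (c i) = ∏ j, μ (w j) := by
    intro k
    rw [Finset.prod_Ico_eq_prod_range, Nat.add_sub_cancel_left, ← Fin.prod_univ_eq_prod_range]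
    simp only [hc k _ (Fin.is_lt _)]
  have hsum : ∑' k, ∏ i ∈ Finset.Ico (k * ℓ) (k * ℓ + ℓ), μ (c i) = ∞ := by
    simp only [hblock]
    exact ENNReal.tsum_const_eq_top_of_ne_zero (Finset.prod_ne_zero_iff.2 fun j _ ↦ (hw j).ne')
  filter_upwards [ae_frequently_forall_mem_eq hP (pairwise_disjoint_Ico_mul ℓ) c hsum] with X hX
  refine hX.mono fun k hk j ↦ ?_
  rw [hk _ (Finset.mem_Ico.2 ⟨by omega, by omega⟩), hc k j j.is_lt]

end Cylinders

lemma prod_ofFn_add_eq_mul {M : Type*} [Monoid M] (X : ℕ → M) (m n : ℕ) :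
    (List.ofFn fun i : Fin (m + n) ↦ X i).prod =
      (List.ofFn fun i : Fin m ↦ X i).prod * (List.ofFn fun j : Fin n ↦ X (m + j)).prod := by
  rw [List.ofFn_add, List.prod_append]
  rfl

section Seminorm

variable {G : Type*} [Group G] {f : G → ℝ}

lemma apply_le_apply_add_apply_mul (h_mul : ∀ g h, f (g * h) ≤ f g + f h)
    (h_inv : ∀ g, f g = f g⁻¹) (a b : G) : f b ≤ f a + f (a * b) :=
  calc f b = f (a⁻¹ * (a * b)) := by rw [inv_mul_cancel_left]
    _ ≤ f a⁻¹ + f (a * b) := h_mul _ _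
    _ = f a + f (a * b) := by rw [← h_inv]

lemma frequently_lt_of_frequently_mul_eq (h_mul : ∀ g h, f (g * h) ≤ f g + f h)
    (h_inv : ∀ g, f g = f g⁻¹) {τ : ℕ → G} {g : G} {ℓ : ℕ} {d : ℝ} (hg : 2 * d < f g)
    (h : ∃ᶠ m in atTop, τ (m + ℓ) = τ m * g) : ∃ᶠ n in atTop, d < f (τ n) := by
  rw [frequently_atTop] at h ⊢
  intro N
  obtain ⟨m, hm, hτ⟩ := h N
  have hle := apply_le_apply_add_apply_mul h_mul h_inv (τ m) g
  rw [← hτ] at hle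
  by_cases hd : d < f (τ m)
  · exact ⟨m, hm, hd⟩
  · exact ⟨m + ℓ, by omega, by linarith⟩

end Seminorm

theorem stmt_8_general {G : Type*} [Group G]
    [MeasurableSpace G] [DiscreteMeasurableSpace G]
    (μ : G → ENNReal)
    (hnd : ∀ g : G, ∃ L : List G, L ≠ [] ∧ (∀ x ∈ L, 0 < μ x) ∧ L.prod = g)
    (nrm : G → ℝ)
    (h3 : ∀ g h : G, nrm (g * h) ≤ nrm g + nrm h)
    (h4 : ∀ g : G, nrm g = nrm g⁻¹)
    (hub : ∀ d : ℝ, ∃ g : G, d < nrm g)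
    (P : Measure (ℕ → G)) [IsProbabilityMeasure P]
    (hP : ∀ (s : Finset ℕ) (c : ℕ → G),
      P {X | ∀ i ∈ s, X i = c i} = ∏ i ∈ s, μ (c i)) :
    ∀ᵐ X ∂P, ∀ d : ℝ, ∃ᶠ n in atTop,
      d < nrm ((List.ofFn fun i : Fin n => X (i : ℕ)).prod) := by
  have key : ∀ D : ℕ, ∀ᵐ X ∂P, ∃ᶠ n in atTop,
      (D : ℝ) < nrm ((List.ofFn fun i : Fin n => X (i : ℕ)).prod) := by
    intro D
    obtain ⟨g, hg⟩ := hub (2 * D)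
    obtain ⟨L, hL, hLμ, rfl⟩ := hnd g
    have hℓ : 0 < L.length := List.length_pos_iff.2 hL
    filter_upwards [ae_frequently_forall_fin_eq hP hℓ L.get fun j ↦ hLμ _ (L.get_mem j)]
      with X hX
    have hmul : Tendsto (· * L.length) atTop atTop :=
      tendsto_atTop_mono (fun k ↦ Nat.le_mul_of_pos_right k hℓ) tendsto_id
    refine frequently_lt_of_frequently_mul_eq (ℓ := L.length) h3 h4 hg
      (hmul.frequently_map _ (fun k hk ↦ ?_) hX)
    simp only [prod_ofFn_add_eq_mul, hk, List.ofFn_get]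
  filter_upwards [ae_all_iff.2 key] with X hX d
  obtain ⟨D, hD⟩ := exists_nat_gt d
  exact (hX D).mono fun n hn ↦ hD.trans hn

/-- If `μ` is a non-degenerate probability measure on a countable group `G` and `nrm`
is an unbounded seminorm on `G`, then for almost every increment sequence (with respect
to the product measure `P = μ^{⊗ℕ}`, characterized on cylinders) the path
`τ_n = X₁⋯X_n` satisfies `lim sup nrm(τ_n) = ∞`, i.e. for every `d` one has
`nrm(τ_n) > d` for infinitely many `n`. -/
theorem stmt_8 {G : Type*} [Group G] [Countable G]
    [MeasurableSpace G] [DiscreteMeasurableSpace G]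
    (μ : G → ENNReal) (hμ : ∑' g, μ g = 1)
    (hnd : ∀ g : G, ∃ L : List G, L ≠ [] ∧ (∀ x ∈ L, 0 < μ x) ∧ L.prod = g)
    (nrm : G → ℝ)
    (h1 : ∀ g : G, 0 ≤ nrm g) (h2 : nrm 1 = 0)
    (h3 : ∀ g h : G, nrm (g * h) ≤ nrm g + nrm h)
    (h4 : ∀ g : G, nrm g = nrm g⁻¹)
    (hub : ∀ d : ℝ, ∃ g : G, d < nrm g)
    (P : Measure (ℕ → G)) [IsProbabilityMeasure P]
    (hP : ∀ (s : Finset ℕ) (c : ℕ → G),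
      P {X | ∀ i ∈ s, X i = c i} = ∏ i ∈ s, μ (c i)) :
    ∀ᵐ X ∂P, ∀ d : ℝ, ∃ᶠ n in atTop,
      d < nrm ((List.ofFn fun i : Fin n => X (i : ℕ)).prod) :=
  stmt_8_general μ hnd nrm h3 h4 hub P hP
end

section
/- Let G be a torsion-free group in which commutation is transitive, i.e. for all a, b, c ∈ G with b ≠ 1, if a commutes with b and b commutes with c then a commutes with c. If G has an abelian subgroup of finite index, then G is abelian. -/
/-- A torsion-free group in which commutation is transitive and which has an abelian
subgroup of finite index is abelian. -/
theorem stmt_9 {G : Type*} [Group G]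
    (htf : ∀ g : G, g ≠ 1 → ∀ n : ℕ, 0 < n → g ^ n ≠ 1)
    (hct : ∀ a b c : G, b ≠ 1 → a * b = b * a → b * c = c * b → a * c = c * a)
    (H : Subgroup G) (habel : ∀ x ∈ H, ∀ y ∈ H, x * y = y * x)
    (hfi : H.index ≠ 0) :
    ∀ x y : G, x * y = y * x := by
  intro x y
  by_cases hx : x = 1
  · simp [hx]
  by_cases hy : y = 1
  · simp [hy]
  obtain ⟨k, hk, -, hxk⟩ := Subgroup.exists_pow_mem_of_index_ne_zero hfi x
  obtain ⟨m, hm, -, hym⟩ := Subgroup.exists_pow_mem_of_index_ne_zero hfi y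
  have hxk1 : (x : G) ^ k ≠ 1 := htf x hx k hk
  have hym1 : (y : G) ^ m ≠ 1 := htf y hy m hm
  have h1 : x * x ^ k = x ^ k * x := Commute.self_pow x k
  have h2 : x ^ k * y ^ m = y ^ m * x ^ k := habel _ hxk _ hym
  have h3 : x * y ^ m = y ^ m * x := hct x (x ^ k) (y ^ m) hxk1 h1 h2
  have h4 : y ^ m * y = y * y ^ m := Commute.pow_self y m
  exact hct x (y ^ m) y hym1 h3 h4
end

section
/- Let G be a countable group acting measurably on a measurable space M, let μ be a non-degenerate probability measure on G, and let ν be a μ-stationary probability measure on M. Let E ⊆ M be a measurable subset such that for every g ∈ G either g·E = E or (g·E) ∩ E = ∅, and suppose there is an infinite family of pairwise-disjoint sets of the form g·E with g ∈ G. Then ν(E) = 0. -/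
open MeasureTheory Pointwise Function

/-!
Put `t g = ν (g • E)`. Distinct translates of `E` are disjoint, so only finitely many of them
have measure above any positive threshold and `t` attains its supremum at some `g₀`.
Stationarity says `t g = ∑ μ h * t (h⁻¹ * g)`, a convex combination, so the maximum propagates
from `g` to `h⁻¹ * g` whenever `μ h > 0`, hence by non-degeneracy to all of `G`: `t` is constant.
Infinitely many disjoint translates of equal measure `ν E` in a probability space force `ν E = 0`.
-/

namespace MeasureTheory.Measure

variable {α ι : Type*} [MeasurableSpace α] (ν : Measure α) [IsFiniteMeasure ν]
  {As : ι → Set α}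

theorem exists_forall_measure_le_of_pairwise_disjoint [Nonempty ι]
    (hAs : ∀ i, MeasurableSet (As i)) (hd : Pairwise (Disjoint on As)) :
    ∃ i, ∀ j, ν (As j) ≤ ν (As i) := by
  by_cases hzero : ∀ i, ν (As i) = 0
  · exact ⟨Classical.arbitrary ι, fun j => by simp [hzero j]⟩
  obtain ⟨i₀, hi₀⟩ := not_forall.1 hzero
  have hfin := finite_const_le_meas_of_disjoint_iUnion ν (pos_iff_ne_zero.2 hi₀) hAs hd
    (measure_ne_top ν _)
  obtain ⟨i, hi, hmax⟩ :=
    Set.exists_max_image _ (fun i => ν (As i)) hfin ⟨i₀, Set.mem_ofPred.2 le_rfl⟩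
  refine ⟨i, fun j => ?_⟩
  by_cases hj : ν (As i₀) ≤ ν (As j)
  · exact hmax j hj
  · exact (not_le.1 hj).le.trans hi

theorem eq_zero_of_infinite_of_pairwise_disjoint [Infinite ι]
    (hAs : ∀ i, MeasurableSet (As i)) (hd : Pairwise (Disjoint on As)) {c : ENNReal}
    (hc : ∀ i, ν (As i) = c) : c = 0 := by
  by_contra hc0
  have hfin := finite_const_le_meas_of_disjoint_iUnion ν (pos_iff_ne_zero.2 hc0) hAs hd
    (measure_ne_top ν _)
  simp only [hc, le_refl, Set.ofPred_true] at hfin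
  exact Set.infinite_univ hfin

end MeasureTheory.Measure

theorem ENNReal.eq_of_tsum_mul_eq_of_forall_le {ι : Type*} {p a : ι → ENNReal} {m : ENNReal}
    (hp : ∑' i, p i = 1) (ha : ∀ i, a i ≤ m) (hm : m ≠ ⊤) (hsum : ∑' i, p i * a i = m)
    {i : ι} (hi : p i ≠ 0) : a i = m := by
  by_contra hne
  have hpi : p i ≠ ⊤ := ne_top_of_le_ne_top ENNReal.one_ne_top (hp ▸ ENNReal.le_tsum i)
  have hlt : ∑' j, p j * a j < ∑' j, p j * m :=
    ENNReal.tsum_lt_tsum (hsum ▸ hm) (fun j => mul_le_mul_right (ha j) _)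
      ((ENNReal.mul_lt_mul_iff_right hi hpi).2 ((ha i).lt_of_ne hne))
  rw [ENNReal.tsum_mul_right, hp, one_mul, hsum] at hlt
  exact lt_irrefl m hlt

theorem Submonoid.inv_mul_mem_of_mem_closure {G : Type*} [Group G] {S A : Set G}
    (hSA : ∀ s ∈ S, ∀ g ∈ A, s⁻¹ * g ∈ A) {k : G} (hk : k ∈ Submonoid.closure S) :
    ∀ g ∈ A, k⁻¹ * g ∈ A := by
  induction hk using Submonoid.closure_induction with
  | mem s hs => exact hSA s hs
  | one => simp
  | mul a b _ _ iha ihb =>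
    intro g hg
    rw [mul_inv_rev, mul_assoc]
    exact ihb _ (iha g hg)

section Harmonic

variable {G : Type*} [Group G]

def IsHarmonic (μ : G → ENNReal) (t : G → ENNReal) : Prop :=
  ∀ g, t g = ∑' h, μ h * t (h⁻¹ * g)

theorem IsHarmonic.eq_of_forall_le {μ t : G → ENNReal} (ht : IsHarmonic μ t)
    (hμ : ∑' g, μ g = 1) (hsupp : Submonoid.closure {g | μ g ≠ 0} = ⊤) {g₀ : G}
    (hmax : ∀ g, t g ≤ t g₀) (htop : t g₀ ≠ ⊤) (g : G) : t g = t g₀ := by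
  have hprop : ∀ h ∈ {g | μ g ≠ 0}, ∀ g ∈ {g | t g = t g₀}, h⁻¹ * g ∈ {g | t g = t g₀} :=
    fun h hh g hg => ENNReal.eq_of_tsum_mul_eq_of_forall_le hμ (a := fun k => t (k⁻¹ * g))
      (fun _ => hmax _) htop (hg ▸ (ht g).symm) hh
  have := Submonoid.inv_mul_mem_of_mem_closure hprop (hsupp ▸ Submonoid.mem_top (g₀ * g⁻¹)) g₀ rfl
  rwa [mul_inv_rev, inv_inv, inv_mul_cancel_right] at this

end Harmonic

section Translates

variable {G M : Type*} [Group G] [MeasurableSpace M] [MulAction G M]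

theorem measurableSet_smul_set_of_measurable_smul
    (hmeas : ∀ g : G, Measurable fun x : M => g • x) {E : Set M} (hE : MeasurableSet E) (g : G) :
    MeasurableSet (g • E) := by
  rw [← Set.preimage_smul_inv]
  exact hmeas g⁻¹ hE

theorem isHarmonic_measure_smul_set_of_stationary
    (hmeas : ∀ g : G, Measurable fun x : M => g • x) (μ : G → ENNReal) (ν : Measure M)
    (hstat : ∀ E : Set M, MeasurableSet E →
      ν E = ∑' g : G, μ g * ν ((fun x => g • x) ⁻¹' E))
    {E : Set M} (hE : MeasurableSet E) :
    IsHarmonic μ fun g => ν (g • E) := fun g => by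
  simp_rw [hstat _ (measurableSet_smul_set_of_measurable_smul hmeas hE g), Set.preimage_smul,
    smul_smul]

end Translates

theorem stmt_12_general {G M : Type*} [Group G]
    [MeasurableSpace M] [MulAction G M]
    (hmeas : ∀ g : G, Measurable fun x : M => g • x)
    (μ : G → ENNReal) (hμ : ∑' g, μ g = 1)
    (hnd : ∀ g : G, ∃ L : List G, L ≠ [] ∧ (∀ x ∈ L, 0 < μ x) ∧ L.prod = g)
    (ν : Measure M) [IsProbabilityMeasure ν]
    (hstat : ∀ E : Set M, MeasurableSet E →
      ν E = ∑' g : G, μ g * ν ((fun x => g • x) ⁻¹' E))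
    (E : Set M) (hE : MeasurableSet E)
    (halt : ∀ g : G, g • E = E ∨ Disjoint (g • E) E)
    (hinf : ∃ S : Set G, S.Infinite ∧
      ∀ g ∈ S, ∀ h ∈ S, g ≠ h → Disjoint (g • E) (h • E)) :
    ν E = 0 := by
  have hmeasE := measurableSet_smul_set_of_measurable_smul hmeas hE
  have hblock : MulAction.IsBlock G E := MulAction.isBlock_iff_smul_eq_or_disjoint.2 halt
  obtain ⟨⟨_, g₀, rfl⟩, hg₀⟩ := Measure.exists_forall_measure_le_of_pairwise_disjoint ν
    (As := ((↑) : Set.range (fun g : G => g • E) → Set M)) (by rintro ⟨_, g, rfl⟩; exact hmeasE g)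
    (MulAction.isBlock_iff_pairwiseDisjoint_range_smul.1 hblock).subtype
  have hsupp : Submonoid.closure {g | μ g ≠ 0} = ⊤ := (Submonoid.eq_top_iff' _).2 fun g => by
    obtain ⟨L, -, hpos, rfl⟩ := hnd g
    exact list_prod_mem fun x hx => Submonoid.subset_closure (hpos x hx).ne'
  have hconst := (isHarmonic_measure_smul_set_of_stationary hmeas μ ν hstat hE).eq_of_forall_le
    hμ hsupp (fun g => hg₀ ⟨_, g, rfl⟩) (measure_ne_top ν _)
  obtain ⟨S, hSinf, hSdisj⟩ := hinf
  have := hSinf.to_subtype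
  refine Measure.eq_zero_of_infinite_of_pairwise_disjoint ν (As := fun g : S => (g : G) • E)
    (fun g => hmeasE g) (fun g h hne => hSdisj g g.2 h h.2 (Subtype.coe_ne_coe.2 hne)) ?_
  simp [hconst, ← hconst 1]

/-- (Kaimanovich–Masur) Let a countable group `G` act measurably on a measurable space
`M`, let `μ` be a non-degenerate probability measure on `G` and `ν` a `μ`-stationary
probability measure on `M`. If `E` is a measurable set such that every translate `g • E`
either equals `E` or is disjoint from `E`, and there are infinitely many pairwise disjoint
translates of `E`, then `ν E = 0`. -/
theorem stmt_12 {G M : Type*} [Group G] [Countable G]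
    [MeasurableSpace M] [MulAction G M]
    (hmeas : ∀ g : G, Measurable fun x : M => g • x)
    (μ : G → ENNReal) (hμ : ∑' g, μ g = 1)
    (hnd : ∀ g : G, ∃ L : List G, L ≠ [] ∧ (∀ x ∈ L, 0 < μ x) ∧ L.prod = g)
    (ν : Measure M) [IsProbabilityMeasure ν]
    (hstat : ∀ E : Set M, MeasurableSet E →
      ν E = ∑' g : G, μ g * ν ((fun x => g • x) ⁻¹' E))
    (E : Set M) (hE : MeasurableSet E)
    (halt : ∀ g : G, g • E = E ∨ Disjoint (g • E) E)
    (hinf : ∃ S : Set G, S.Infinite ∧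
      ∀ g ∈ S, ∀ h ∈ S, g ≠ h → Disjoint (g • E) (h • E)) :
    ν E = 0 :=
  stmt_12_general hmeas μ hμ hnd ν hstat E hE halt hinf
end

section
/- Let G be a countable group acting measurably on a measurable space M in which all singletons are measurable, let μ be a non-degenerate probability measure on G, and let ν be a μ-stationary probability measure on M. If the orbit G·x of every point x ∈ M is infinite, then ν is continuous, i.e. ν({x}) = 0 for every x ∈ M. -/
/-!
Suppose some atom of `ν` has positive mass. A finite measure has only finitely many atoms of
mass at least a given `ε > 0`, so the largest atom mass `c` is attained, and the set `A` of
atoms of mass exactly `c` is finite. Evaluating stationarity at a point `x ∈ A` writes `c` as a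
`μ`-average of the masses `ν {g⁻¹ • x}`, all at most `c`; hence `g⁻¹ • x ∈ A` whenever
`μ g > 0`. By non-degeneracy these elements generate `G` as a monoid, so `A` contains a whole
orbit, contradicting that orbits are infinite.
-/

open MeasureTheory

namespace ENNReal

theorem eq_of_tsum_mul_eq_of_le {ι : Type*} {w f : ι → ℝ≥0∞} {c : ℝ≥0∞}
    (hw : ∑' i, w i ≤ 1) (hc : c ≠ ∞) (hf : ∀ i, f i ≤ c) (heq : ∑' i, w i * f i = c)
    {i : ι} (hi : w i ≠ 0) : f i = c := by
  by_contra hne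
  have hwi : w i ≠ ∞ := ne_top_of_le_ne_top one_ne_top (ENNReal.le_tsum i |>.trans hw)
  have hlt : ∑' j, w j * f j < ∑' j, w j * c :=
    ENNReal.tsum_lt_tsum (heq ▸ hc) (fun j => mul_le_mul_right (hf j) _)
      ((ENNReal.mul_lt_mul_iff_right hi hwi).mpr (lt_of_le_of_ne (hf i) hne))
  have hle : ∑' j, w j * c ≤ c := by
    rw [ENNReal.tsum_mul_right]
    exact mul_le_of_le_one_left' hw
  exact (heq ▸ hlt.trans_le hle).false

end ENNReal

namespace MeasureTheory.Measure

variable {α : Type*} [MeasurableSpace α] [MeasurableSingletonClass α]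
  (ν : Measure α) [IsFiniteMeasure ν]

theorem finite_setOf_le_measure_singleton {ε : ENNReal} (hε : ε ≠ 0) :
    {x | ε ≤ ν {x}}.Finite := by
  by_contra hinf
  exact measure_ne_top ν _ (Set.Infinite.meas_eq_top hinf ⟨ε, hε, fun _ hx => hx⟩)

theorem exists_forall_measure_singleton_le {x₀ : α} (hx₀ : ν {x₀} ≠ 0) :
    ∃ a, ∀ x, ν {x} ≤ ν {a} := by
  obtain ⟨a, ha₀, ha⟩ := Set.exists_max_image _ (fun x => ν {x})
    (ν.finite_setOf_le_measure_singleton hx₀) ⟨x₀, le_refl (ν {x₀})⟩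
  refine ⟨a, fun x => ?_⟩
  by_cases hx : ν {x₀} ≤ ν {x}
  · exact ha x hx
  · exact (not_le.mp hx).le.trans ha₀

end MeasureTheory.Measure

theorem Submonoid.closure_eq_top_of_forall_exists_list_prod {G : Type*} [Monoid G] {S : Set G}
    (h : ∀ g : G, ∃ L : List G, (∀ x ∈ L, x ∈ S) ∧ L.prod = g) : closure S = ⊤ := by
  refine eq_top_iff.mpr fun g _ => ?_
  obtain ⟨L, hLS, rfl⟩ := h g
  exact Submonoid.list_prod_mem _ fun x hx => subset_closure (hLS x hx)

theorem MulAction.orbit_subset_of_inv_smul_mem {G M : Type*} [Group G] [MulAction G M]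
    {S : Set G} (hS : Submonoid.closure S = ⊤) {A : Set M}
    (hA : ∀ s ∈ S, ∀ x ∈ A, s⁻¹ • x ∈ A) {a : M} (ha : a ∈ A) : orbit G a ⊆ A := by
  have hclosure : ∀ g ∈ Submonoid.closure S, ∀ x ∈ A, g⁻¹ • x ∈ A := by
    intro g hg
    induction hg using Submonoid.closure_induction with
    | mem s hs => exact hA s hs
    | one => simp
    | mul g h _ _ hg hh =>
      intro x hx
      rw [mul_inv_rev, mul_smul]
      exact hh _ (hg x hx)
  rintro _ ⟨g, rfl⟩
  simpa using hclosure g⁻¹ (hS ▸ Submonoid.mem_top _) a ha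

theorem stmt_13_general {G M : Type*} [Group G]
    [MeasurableSpace M] [MeasurableSingletonClass M] [MulAction G M]
    (μ : G → ENNReal) (hμ : ∑' g, μ g = 1)
    (hnd : ∀ g : G, ∃ L : List G, L ≠ [] ∧ (∀ x ∈ L, 0 < μ x) ∧ L.prod = g)
    (ν : Measure M) [IsProbabilityMeasure ν]
    (hstat : ∀ E : Set M, MeasurableSet E →
      ν E = ∑' g : G, μ g * ν ((fun x => g • x) ⁻¹' E))
    (horb : ∀ x : M, (MulAction.orbit G x).Infinite) :
    ∀ x : M, ν {x} = 0 := by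
  by_contra! ⟨x₀, hx₀⟩
  obtain ⟨a, ha⟩ := ν.exists_forall_measure_singleton_le hx₀
  set A := {x | ν {x} = ν {a}}
  have hA_finite : A.Finite :=
    (ν.finite_setOf_le_measure_singleton (hx₀.bot_lt.trans_le (ha x₀)).ne').subset
      fun _ hx => hx.ge
  have hstat_singleton (x : M) : ν {x} = ∑' g, μ g * ν {g⁻¹ • x} := by
    simpa [Set.preimage_smul] using hstat {x} (measurableSet_singleton x)
  have hA_inv : ∀ g ∈ {g | 0 < μ g}, ∀ x ∈ A, g⁻¹ • x ∈ A := fun g hg x hx =>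
    ENNReal.eq_of_tsum_mul_eq_of_le hμ.le (measure_ne_top ν _) (fun _ => ha _)
      ((hstat_singleton x).symm.trans hx) hg.ne'
  have hgen : Submonoid.closure {g | 0 < μ g} = ⊤ :=
    Submonoid.closure_eq_top_of_forall_exists_list_prod fun g =>
      (hnd g).imp fun _ hL => hL.2
  exact horb a (hA_finite.subset (MulAction.orbit_subset_of_inv_smul_mem hgen hA_inv rfl))

/-- If a countable group `G` acts measurably on a measurable space `M` with all orbits
infinite, `μ` is a non-degenerate probability measure on `G` and `ν` is a `μ`-stationary
probability measure on `M`, then `ν` is continuous: every singleton has measure zero. -/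
theorem stmt_13 {G M : Type*} [Group G] [Countable G]
    [MeasurableSpace M] [MeasurableSingletonClass M] [MulAction G M]
    (hmeas : ∀ g : G, Measurable fun x : M => g • x)
    (μ : G → ENNReal) (hμ : ∑' g, μ g = 1)
    (hnd : ∀ g : G, ∃ L : List G, L ≠ [] ∧ (∀ x ∈ L, 0 < μ x) ∧ L.prod = g)
    (ν : Measure M) [IsProbabilityMeasure ν]
    (hstat : ∀ E : Set M, MeasurableSet E →
      ν E = ∑' g : G, μ g * ν ((fun x => g • x) ⁻¹' E))
    (horb : ∀ x : M, (MulAction.orbit G x).Infinite) :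
    ∀ x : M, ν {x} = 0 :=
  stmt_13_general μ hμ hnd ν hstat horb
end
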